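/- If a matrix C ∈ ℂ^{m×N} has restricted isometry constant δ_{2s} < 1 of order 2s, then for all x ∈ ℂ^N, ‖Cx‖₂ ≤ √(1 + δ_{2s}) · (‖x‖₂ + ‖x‖₁/√(2s)). (The paper states this with √(1 − δ_{2s}); the correct constant is √(1 + δ_{2s}).) -/

import Mathlib

noncomputable def l1 {n : ℕ} (x : Fin n → ℂ) : ℝ := ∑ i, ‖x i‖
noncomputable def l2 {n : ℕ} (x : Fin n → ℂ) : ℝ := Real.sqrt (∑ i, ‖x i‖ ^ 2)
noncomputable def spar {n : ℕ} (x : Fin n → ℂ) : ℕ := (Function.support x).ncard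

/-!
Split `x` greedily into blocks of `2s` entries, largest first. Each block is `2s`-sparse, so RIP
bounds `‖C x_B‖₂` by `√(1+δ) ‖x_B‖₂`, and the triangle inequality sums these. The first block has
`‖x_B‖₂ ≤ ‖x‖₂`; every later entry is at most the average modulus of the previous block, so a later
block has `‖x_B‖₂ ≤ √(2s) · (‖x_{B'}‖₁ / 2s) = ‖x_{B'}‖₁ / √(2s)`, and these add up to `‖x‖₁ / √(2s)`.
The induction carries the entrywise bound `t` along, which is why `min (l2 y) (√k * t)` appears.
-/

open Finset

lemma Finset.exists_subset_card_eq_forall_sdiff_le {ι : Type*} [DecidableEq ι] (g : ι → ℝ)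
    {S : Finset ι} {k : ℕ} (hk : k ≤ #S) :
    ∃ T ⊆ S, #T = k ∧ ∀ i ∈ T, ∀ j ∈ S \ T, g j ≤ g i := by
  induction k with
  | zero => exact ⟨∅, empty_subset _, card_empty, by simp⟩
  | succ k ih =>
    obtain ⟨T, hTS, hTk, hT⟩ := ih (by omega)
    have hne : (S \ T).Nonempty := by
      rw [← card_pos, card_sdiff_of_subset hTS]; omega
    obtain ⟨j, hj, hj_max⟩ := (S \ T).exists_max_image g hne
    rw [mem_sdiff] at hj
    refine ⟨insert j T, insert_subset hj.1 hTS, by rw [card_insert_of_notMem hj.2, hTk], ?_⟩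
    intro i hi l hl
    have hl' : l ∈ S \ T := by simp only [mem_sdiff, mem_insert, not_or] at hl ⊢; tauto
    rcases mem_insert.1 hi with rfl | hi
    · exact hj_max l hl'
    · exact hT i hi l hl'

section Sparse

variable {n : ℕ}

lemma spar_eq_card (y : Fin n → ℂ) : spar y = #{i | y i ≠ 0} := by
  rw [spar, ← Set.ncard_coe_finset]
  congr
  ext
  simp

lemma l1_nonneg (y : Fin n → ℂ) : 0 ≤ l1 y :=
  sum_nonneg fun _ _ => norm_nonneg _

lemma l2_nonneg (y : Fin n → ℂ) : 0 ≤ l2 y := Real.sqrt_nonneg _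

lemma l2_eq_norm (y : Fin n → ℂ) : l2 y = ‖(WithLp.toLp 2 y : EuclideanSpace ℂ (Fin n))‖ := by
  simp [EuclideanSpace.norm_eq, l2]

lemma l2_add_le (y z : Fin n → ℂ) : l2 (y + z) ≤ l2 y + l2 z := by
  simpa only [l2_eq_norm, WithLp.toLp_add] using norm_add_le _ _

lemma l2_indicator_le (s : Set (Fin n)) (y : Fin n → ℂ) : l2 (s.indicator y) ≤ l2 y :=
  Real.sqrt_le_sqrt <| sum_le_sum fun i _ => by by_cases h : i ∈ s <;> simp [h]

lemma l2_le_sqrt_mul {k : ℕ} {t : ℝ} (ht : 0 ≤ t) {y : Fin n → ℂ} (hy : spar y ≤ k)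
    (hyt : ∀ i, ‖y i‖ ≤ t) : l2 y ≤ √k * t := by
  rw [spar_eq_card] at hy
  rw [l2, ← Real.sqrt_sq ht, ← Real.sqrt_mul (Nat.cast_nonneg _)]
  apply Real.sqrt_le_sqrt
  calc ∑ i, ‖y i‖ ^ 2 = ∑ i with y i ≠ 0, ‖y i‖ ^ 2 :=
        (sum_filter_of_ne fun i _ h => by simpa using h).symm
    _ ≤ ∑ i with y i ≠ 0, t ^ 2 := by gcongr with i; exact hyt i
    _ ≤ k * t ^ 2 := by rw [sum_const, nsmul_eq_mul]; gcongr

lemma l1_indicator_add_compl (s : Set (Fin n)) (y : Fin n → ℂ) :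
    l1 (s.indicator y) + l1 (sᶜ.indicator y) = l1 y := by
  simp only [l1, ← sum_add_distrib]
  congr with i
  by_cases h : i ∈ s <;> simp [h]

lemma l1_indicator (T : Finset (Fin n)) (y : Fin n → ℂ) :
    l1 ((T : Set (Fin n)).indicator y) = ∑ i ∈ T, ‖y i‖ := by
  simp only [l1, norm_indicator_eq_indicator_norm]
  exact sum_indicator_subset _ (subset_univ T)

lemma spar_indicator_le (T : Finset (Fin n)) (y : Fin n → ℂ) :
    spar ((T : Set (Fin n)).indicator y) ≤ #T := by
  rw [spar_eq_card]
  apply card_le_card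
  intro i
  simp only [mem_filter, mem_univ, true_and, Set.indicator_apply_ne_zero]
  exact And.left

lemma spar_indicator_compl (T : Finset (Fin n)) (y : Fin n → ℂ)
    (hT : T ⊆ ({i | y i ≠ 0} : Finset (Fin n))) :
    spar ((T : Set (Fin n))ᶜ.indicator y) = spar y - #T := by
  rw [spar_eq_card, spar_eq_card, ← card_sdiff_of_subset hT]
  congr 1
  ext i
  by_cases h : i ∈ T <;> simp [h]

lemma card_mul_norm_indicator_compl_le (T : Finset (Fin n)) (y : Fin n → ℂ)
    (hT : ∀ i ∈ T, ∀ j ∉ T, ‖y j‖ ≤ ‖y i‖) (j : Fin n) :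
    #T * ‖(T : Set (Fin n))ᶜ.indicator y j‖ ≤ l1 ((T : Set (Fin n)).indicator y) := by
  rw [l1_indicator]
  by_cases hj : j ∈ T
  · simpa [hj] using sum_nonneg fun i _ => norm_nonneg (y i)
  · calc #T * ‖(T : Set (Fin n))ᶜ.indicator y j‖ = ∑ _i ∈ T, ‖y j‖ := by
          simp [hj, sum_const, nsmul_eq_mul]
      _ ≤ ∑ i ∈ T, ‖y i‖ := sum_le_sum fun i hi => hT i hi j hj

lemma le_of_subadditive_of_le_on_sparse {k : ℕ} (hk : 0 < k) {K : ℝ} (hK : 0 ≤ K)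
    (f : (Fin n → ℂ) → ℝ)
    (hf_add : ∀ y z, f (y + z) ≤ f y + f z) (hf_sparse : ∀ z, spar z ≤ k → f z ≤ K * l2 z)
    (y : Fin n → ℂ) {t : ℝ} (ht : 0 ≤ t) (hyt : ∀ i, ‖y i‖ ≤ t) :
    f y ≤ K * (min (l2 y) (√k * t) + l1 y / √k) := by
  induction hp : spar y using Nat.strong_induction_on generalizing y t with
  | _ p ih =>
  have hkR : (0 : ℝ) < k := by exact_mod_cast hk
  have hk' : 0 < √(k : ℝ) := Real.sqrt_pos.2 hkR
  by_cases hsmall : p ≤ k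
  · calc f y ≤ K * min (l2 y) (√k * t) := by
          rw [min_eq_left (l2_le_sqrt_mul ht (hp ▸ hsmall) hyt)]
          exact hf_sparse y (hp ▸ hsmall)
      _ ≤ _ := by gcongr; exact le_add_of_nonneg_right (div_nonneg (l1_nonneg y) hk'.le)
  classical
  obtain ⟨T, hTS, hTk, hT_top⟩ := exists_subset_card_eq_forall_sdiff_le (‖y ·‖)
    (S := {i | y i ≠ 0}) (k := k) (by rw [← spar_eq_card]; omega)
  set yT := (T : Set (Fin n)).indicator y
  set yc := (T : Set (Fin n))ᶜ.indicator y
  set t' := l1 yT / k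
  have ht' : 0 ≤ t' := div_nonneg (l1_nonneg yT) hkR.le
  have hyc (j : Fin n) : ‖yc j‖ ≤ t' := by
    rw [le_div_iff₀ hkR, mul_comm, ← hTk]
    refine card_mul_norm_indicator_compl_le T y (fun i hi j hj => ?_) j
    by_cases hj0 : y j = 0
    · simp [hj0]
    · exact hT_top i hi j (by simp [hj0, hj])
  have hfT : f yT ≤ K * min (l2 y) (√k * t) := by
    refine (hf_sparse yT (hTk ▸ spar_indicator_le T y)).trans ?_
    gcongr
    exact le_min (l2_indicator_le _ y) (l2_le_sqrt_mul ht (hTk ▸ spar_indicator_le T y)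
      fun i => (norm_indicator_le_norm_self _ _).trans (hyt i))
  have hfc := ih _ (by rw [← hp, spar_indicator_compl T y hTS]; omega) yc ht' hyc rfl
  have hmid : √k * t' = l1 yT / √k := by
    rw [eq_div_iff hk'.ne', mul_comm, ← mul_assoc, Real.mul_self_sqrt (Nat.cast_nonneg k)]
    exact mul_div_cancel₀ _ hkR.ne'
  calc f y = f (yT + yc) := by rw [Set.indicator_self_add_compl]
    _ ≤ f yT + f yc := hf_add _ _
    _ ≤ K * min (l2 y) (√k * t) + K * (√k * t' + l1 yc / √k) := by
        gcongr
        refine hfc.trans ?_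
        gcongr
        exact min_le_right _ _
    _ = K * (min (l2 y) (√k * t) + l1 y / √k) := by
        rw [hmid, ← l1_indicator_add_compl T y]
        ring

end Sparse

theorem stmt1_general {m N s : ℕ} (C : Matrix (Fin m) (Fin N) ℂ) (δ : ℝ)
    (hs : 1 ≤ s)
    (hRIP : ∀ z : Fin N → ℂ, spar z ≤ 2 * s →
      (1 - δ) * l2 z ^ 2 ≤ l2 (C.mulVec z) ^ 2 ∧
      l2 (C.mulVec z) ^ 2 ≤ (1 + δ) * l2 z ^ 2) :
    ∀ x : Fin N → ℂ,
      l2 (C.mulVec x) ≤ Real.sqrt (1 + δ) * (l2 x + l1 x / Real.sqrt (2 * s)) := by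
  intro x
  have hsparse (z : Fin N → ℂ) (hz : spar z ≤ 2 * s) : l2 (C.mulVec z) ≤ √(1 + δ) * l2 z :=
    calc l2 (C.mulVec z) = √(l2 (C.mulVec z) ^ 2) := (Real.sqrt_sq (l2_nonneg _)).symm
      _ ≤ √((1 + δ) * l2 z ^ 2) := Real.sqrt_le_sqrt (hRIP z hz).2
      _ = √(1 + δ) * l2 z := by
        rw [Real.sqrt_mul' _ (sq_nonneg _), Real.sqrt_sq (l2_nonneg z)]
  have hx := le_of_subadditive_of_le_on_sparse (k := 2 * s) (by omega)
    (Real.sqrt_nonneg (1 + δ)) (fun z => l2 (C.mulVec z))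
    (fun y z => by simpa only [Matrix.mulVec_add] using l2_add_le _ _)
    hsparse x (l1_nonneg x) fun i => single_le_sum (fun j _ => norm_nonneg (x j)) (mem_univ i)
  push_cast at hx
  exact hx.trans (by gcongr; exact min_le_left _ _)

theorem stmt1 {m N s : ℕ} (C : Matrix (Fin m) (Fin N) ℂ) (δ : ℝ)
    (hs : 1 ≤ s) (hδ0 : 0 ≤ δ) (hδ1 : δ < 1)
    (hRIP : ∀ z : Fin N → ℂ, spar z ≤ 2 * s →
      (1 - δ) * l2 z ^ 2 ≤ l2 (C.mulVec z) ^ 2 ∧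
      l2 (C.mulVec z) ^ 2 ≤ (1 + δ) * l2 z ^ 2) :
    ∀ x : Fin N → ℂ,
      l2 (C.mulVec x) ≤ Real.sqrt (1 + δ) * (l2 x + l1 x / Real.sqrt (2 * s)) :=
  stmt1_general C δ hs hRIP
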